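/- arXiv:2504.15732 — 2 statements merged into one kernel-verified Lean document; each statement's English description precedes it below -/
import Mathlib

section
/- Let R be a commutative Noetherian integral domain that is not a field. If M is a divisible R-module (i.e. rM = M for every nonzero r in R) and N is a finitely generated R-module, then every R-linear map f : M → N is zero. -/
/-!
The image of `f` is a finitely generated divisible module `D`. Choose a nonzero nonunit `r`.
Since `D = r • D`, Nakayama's lemma gives `x ≡ 1 [mod r]` killing `D`; such an `x` is nonzero
because `r` is not a unit, so `D = x • D = 0`.
-/

theorem Module.Finite.subsingleton_of_divisible {R D : Type*} [CommRing R] [AddCommGroup D]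
    [Module R D] [Module.Finite R D] {r : R} (hr0 : r ≠ 0) (hr : ¬IsUnit r)
    (hdiv : ∀ a : R, a ≠ 0 → ∀ d : D, ∃ d' : D, a • d' = d) : Subsingleton D := by
  have hle : (⊤ : Submodule R D) ≤ Ideal.span {r} • ⊤ := by
    intro d _
    obtain ⟨d', rfl⟩ := hdiv r hr0 d
    exact Submodule.smul_mem_smul (Ideal.mem_span_singleton_self r) trivial
  obtain ⟨x, hx1, hx0⟩ := Submodule.exists_sub_one_mem_and_smul_eq_zero_of_fg_of_le_smul
    (Ideal.span {r}) ⊤ Module.Finite.fg_top hle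
  have hx : x ≠ 0 := by
    rintro rfl
    obtain ⟨a, ha⟩ := Ideal.mem_span_singleton'.mp hx1
    exact hr (.of_mul_eq_one (-a) (by linear_combination -ha))
  refine subsingleton_of_forall_eq 0 fun d => ?_
  obtain ⟨d', rfl⟩ := hdiv x hx d
  exact hx0 d' trivial

/-- Let `R` be a commutative Noetherian integral domain that is not a field. If `M` is a
divisible `R`-module and `N` a finitely generated `R`-module, every `R`-linear map
`f : M → N` is zero. -/
theorem stmt_0 {R : Type*} [CommRing R] [IsDomain R] [IsNoetherianRing R]
    (hR : ¬ IsField R)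
    {M N : Type*} [AddCommGroup M] [Module R M] [AddCommGroup N] [Module R N]
    (hdiv : ∀ r : R, r ≠ 0 → ∀ m : M, ∃ m' : M, r • m' = m)
    [Module.Finite R N]
    (f : M →ₗ[R] N) : f = 0 := by
  obtain ⟨r, hr0, hr⟩ := Ring.exists_not_isUnit_of_not_isField hR
  have hrange : Subsingleton (LinearMap.range f) := by
    refine Module.Finite.subsingleton_of_divisible hr0 hr fun a ha ⟨_, m, rfl⟩ => ?_
    obtain ⟨m', rfl⟩ := hdiv a ha m
    exact ⟨f.rangeRestrict m', Subtype.ext (map_smul f a m').symm⟩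
  exact LinearMap.range_eq_bot.mp (Submodule.subsingleton_iff_eq_bot.mp hrange)
end

section
/- Let ℓ be a prime, let N and Q be abelian groups with N finitely generated, and let u : N → Q be a homomorphism with kernel P. If for every positive integer n the induced map N ⊗_ℤ ℤ/ℓⁿℤ → Q ⊗_ℤ ℤ/ℓⁿℤ is injective, then P has rank 0, i.e. P ⊗_ℤ ℚ = 0 (so P is a finite group). -/
/-!
If `u x = 0`, injectivity of `N ⊗ ℤ/ℓⁿ → Q ⊗ ℤ/ℓⁿ` forces `x ⊗ 1 = 0`, i.e. `x ∈ ℓⁿ N`, for every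
`n`. By Krull's intersection theorem for the finitely generated `ℤ`-module `N`, an element of
`⋂ₙ ℓⁿ N` is killed by some `1 - ℓ a ≠ 0`. So the kernel is a finitely generated torsion group,
hence finite, and it dies after tensoring with `ℚ`.
-/

open TensorProduct

theorem TensorProduct.tmul_one_eq_zero_iff_mem_smul_top {R M : Type*} [CommRing R]
    [AddCommGroup M] [Module R M] (I : Ideal R) (x : M) :
    x ⊗ₜ[R] (1 : R ⧸ I) = 0 ↔ x ∈ I • (⊤ : Submodule R M) := by
  rw [← Submodule.Quotient.mk_eq_zero, ← (tensorQuotEquivQuotSMul M I).symm.map_eq_zero_iff,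
    tensorQuotEquivQuotSMul_symm_mk]

theorem TensorProduct.tmul_one_zmod_eq_zero_iff {M : Type*} [AddCommGroup M] (m : ℕ) (x : M) :
    x ⊗ₜ[ℤ] (1 : ZMod m) = 0 ↔ x ∈ Ideal.span {(m : ℤ)} • (⊤ : Submodule ℤ M) := by
  rw [← tmul_one_eq_zero_iff_mem_smul_top,
    ← ((Int.quotientSpanNatEquivZMod m).toAddEquiv.toIntLinearEquiv.lTensor M).map_eq_zero_iff]
  simp

theorem AddMonoidHom.mem_span_smul_top_of_mem_ker {N Q : Type*} [AddCommGroup N]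
    [AddCommGroup Q] (u : N →+ Q) (m : ℕ)
    (hinj : Function.Injective
      (TensorProduct.map u.toIntLinearMap (LinearMap.id : ZMod m →ₗ[ℤ] ZMod m)))
    {x : N} (hx : x ∈ u.ker) : x ∈ Ideal.span {(m : ℤ)} • (⊤ : Submodule ℤ N) := by
  rw [← tmul_one_zmod_eq_zero_iff]
  apply hinj
  simp [u.mem_ker.mp hx]

theorem Submodule.mem_torsion_of_mem_iInf_pow_smul {R M : Type*} [CommRing R] [IsDomain R]
    [IsNoetherianRing R] [AddCommGroup M] [Module R M] [Module.Finite R M] {I : Ideal R}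
    (hI : I ≠ ⊤) {x : M} (hx : x ∈ ⨅ i : ℕ, I ^ i • (⊤ : Submodule R M)) :
    x ∈ Submodule.torsion R M := by
  obtain ⟨⟨r, hr⟩, hrx⟩ := (I.mem_iInf_smul_pow_eq_bot_iff x).mp hx
  have hr1 : 1 - r ≠ 0 := fun h => hI (I.eq_top_of_isUnit_mem hr (sub_eq_zero.mp h ▸ isUnit_one))
  exact ⟨⟨1 - r, mem_nonZeroDivisors_of_ne_zero hr1⟩, by simp [sub_smul, hrx]⟩

theorem TensorProduct.subsingleton_of_isTorsion {R K P : Type*} [CommRing R] [CommRing K]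
    [Algebra R K] [IsFractionRing R K] [AddCommGroup P] [Module R P]
    (hP : Module.IsTorsion R P) : Subsingleton (K ⊗[R] P) := by
  refine subsingleton_of_forall_eq 0 fun t => ?_
  induction t using TensorProduct.induction_on with
  | zero => rfl
  | tmul q p =>
    obtain ⟨a, ha⟩ := @hP p
    obtain ⟨b, hb⟩ := (IsLocalization.map_units K a).exists_left_inv
    have hq : q = (a : R) • (b * q) := by
      rw [_root_.Algebra.smul_def, ← mul_assoc, mul_comm _ b, hb, one_mul]
    rw [hq, smul_tmul, ← Submonoid.smul_def, ha, tmul_zero]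
  | add s t hs ht => rw [hs, ht, add_zero]

/-- Let `ℓ` be a prime, `N` a finitely generated abelian group, `u : N → Q` a homomorphism
of abelian groups with kernel `P`. If for every positive integer `n` the induced map
`N ⊗ ℤ/ℓⁿℤ → Q ⊗ ℤ/ℓⁿℤ` is injective, then `P` has rank `0`, i.e. `ℚ ⊗ P = 0` (so `P` is a
finite group). -/
theorem stmt_6 (ℓ : ℕ) (hℓ : Nat.Prime ℓ) {N Q : Type*} [AddCommGroup N] [AddCommGroup Q]
    (hfg : AddGroup.FG N) (u : N →+ Q)
    (hinj : ∀ n : ℕ, 0 < n →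
      Function.Injective
        (TensorProduct.map u.toIntLinearMap
          (LinearMap.id : ZMod (ℓ ^ n) →ₗ[ℤ] ZMod (ℓ ^ n)))) :
    Subsingleton (ℚ ⊗[ℤ] u.ker) ∧ Finite u.ker := by
  have : Module.Finite ℤ N := Module.Finite.iff_addGroup_fg.mpr hfg
  have hI : Ideal.span {(ℓ : ℤ)} ≠ ⊤ := by
    rw [Ne, Ideal.span_singleton_eq_top]
    exact (Nat.prime_iff_prime_int.mp hℓ).not_isUnit
  have htors : Module.IsTorsion ℤ u.ker := by
    rintro ⟨x, hx⟩
    have hdiv : ∀ n, x ∈ Ideal.span {(ℓ : ℤ)} ^ n • (⊤ : Submodule ℤ N) := by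
      rintro (_ | n)
      · simp
      · rw [Ideal.span_singleton_pow]
        exact_mod_cast u.mem_span_smul_top_of_mem_ker _ (hinj _ n.succ_pos) hx
    obtain ⟨a, ha⟩ :=
      Submodule.mem_torsion_of_mem_iInf_pow_smul hI ((Submodule.mem_iInf _).mpr hdiv)
    exact ⟨a, Subtype.ext ha⟩
  have : Module.Finite ℤ u.ker :=
    inferInstanceAs (Module.Finite ℤ (AddSubgroup.toIntSubmodule u.ker))
  exact ⟨TensorProduct.subsingleton_of_isTorsion htors, Module.finite_of_fg_torsion _ htors⟩
end
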